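/- arXiv:2506.01791 — 3 statements merged into one kernel-verified Lean document; each statement's English description precedes it below -/
import Mathlib

section
/- Let f₁, f₂ : ℝ^d → ℝ be differentiable with curvatures in [μ₁, L₁] and [μ₂, L₂] (μ₁ < L₁, μ₂ < L₂), and let xₖ, xₖ₊₁ satisfy ∇f₁(xₖ₊₁) = ∇f₂(xₖ). With Δx = xₖ − xₖ₊₁ and Gᵏ = ∇f₁(xₖ) − ∇f₂(xₖ), it holds that ⟨Gᵏ, Δx⟩ ≥ μ₁‖Δx‖² + ‖Gᵏ − μ₁Δx‖²/(L₁−μ₁). -/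
/-!
Subtracting the quadratic `μ₁ ‖·‖² / 2` turns `f₁` into a convex function `g` whose gradient is
`(L₁ - μ₁)`-Lipschitz, i.e. `(L₁ - μ₁) ‖·‖² / 2 - g` is convex. Such gradients are co-coercive:
`‖∇g x - ∇g y‖² / (L₁ - μ₁) ≤ ⟪∇g x - ∇g y, x - y⟫`, which follows by comparing `g` at `y` with its
value one gradient step away, using the tangent-plane lower bound and the quadratic upper bound.
Applied at `x = xₖ`, `y = xₖ₊₁` and with `∇f₁(xₖ₊₁) = ∇f₂(xₖ)`, this is the inequality.
-/

open Set
open scoped RealInnerProductSpace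

variable {E : Type*} [NormedAddCommGroup E] [InnerProductSpace ℝ E] [CompleteSpace E]
  {f g : E → ℝ} {f' g' x y : E}

theorem HasGradientAt.sub (hf : HasGradientAt f f' x) (hg : HasGradientAt g g' x) :
    HasGradientAt (fun y => f y - g y) (f' - g') x := by
  rw [hasGradientAt_iff_hasFDerivAt, map_sub]
  exact hf.hasFDerivAt.sub hg.hasFDerivAt

theorem hasGradientAt_half_mul_norm_sq (c : ℝ) (x : E) :
    HasGradientAt (fun y : E => c / 2 * ‖y‖ ^ 2) (c • x) x := by
  rw [hasGradientAt_iff_hasFDerivAt]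
  refine ((hasStrictFDerivAt_norm_sq x).hasFDerivAt.const_mul (c / 2)).congr_fderiv ?_
  ext v
  simp only [smul_apply, coe_innerSL_apply, nsmul_eq_mul, Nat.cast_ofNat,
    smul_eq_mul, map_smul, InnerProductSpace.toDual_apply_apply]
  ring

theorem ConvexOn.add_inner_le_of_hasGradientAt {s : Set E} (hf : ConvexOn ℝ s f)
    (hx : x ∈ s) (hy : y ∈ s) (hf' : HasGradientAt f f' x) :
    f x + ⟪f', y - x⟫ ≤ f y := by
  let line : ℝ →ᵃ[ℝ] E := AffineMap.lineMap x y
  have hline : ConvexOn ℝ (Icc 0 1) (f ∘ line) :=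
    (hf.comp_affineMap _).subset (fun _ ht => hf.1.lineMap_mem hx hy ht) (convex_Icc 0 1)
  have hderiv : HasDerivAt (f ∘ line) ⟪f', y - x⟫ 0 := by
    simpa using hf'.hasFDerivAt.comp_hasDerivAt_of_eq 0 AffineMap.hasDerivAt_lineMap
      (AffineMap.lineMap_apply_zero x y).symm
  have hslope := hline.le_slope_of_hasDerivAt (left_mem_Icc.2 zero_le_one)
    (right_mem_Icc.2 zero_le_one) one_pos hderiv
  simp only [slope_def_field, Function.comp_apply, AffineMap.lineMap_apply_one,
    AffineMap.lineMap_apply_zero, sub_zero, div_one, line] at hslope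
  linarith

theorem ConvexOn.le_add_inner_add_half_mul_norm_sq {c : ℝ}
    (hs : ConvexOn ℝ univ fun y => c / 2 * ‖y‖ ^ 2 - g y) (hg : HasGradientAt g g' x) (y : E) :
    g y ≤ g x + ⟪g', y - x⟫ + c / 2 * ‖y - x‖ ^ 2 := by
  have h := hs.add_inner_le_of_hasGradientAt (mem_univ x) (mem_univ y)
    ((hasGradientAt_half_mul_norm_sq c x).sub hg)
  have hnorm : ‖y‖ ^ 2 = ‖x‖ ^ 2 + 2 * ⟪x, y - x⟫ + ‖y - x‖ ^ 2 := by
    rw [← norm_add_sq_real, add_sub_cancel]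
  rw [inner_sub_left, real_inner_smul_left] at h
  linear_combination h + c / 2 * hnorm

theorem ConvexOn.add_inner_add_norm_sq_div_le {c : ℝ} (hc : 0 < c) (hg : ConvexOn ℝ univ g)
    (hs : ConvexOn ℝ univ fun y => c / 2 * ‖y‖ ^ 2 - g y)
    (hx : HasGradientAt g f' x) (hy : HasGradientAt g g' y) :
    g x + ⟪f', y - x⟫ + ‖g' - f'‖ ^ 2 / (2 * c) ≤ g y := by
  set w := g' - f'
  -- the gradient step from `y` towards the minimiser of `g - ⟪f', ·⟫`
  set z := y - c⁻¹ • w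
  have hxz := hg.add_inner_le_of_hasGradientAt (mem_univ x) (mem_univ z) hx
  have hzy := hs.le_add_inner_add_half_mul_norm_sq hy z
  have hzx : z - x = (y - x) - c⁻¹ • w := by simp only [z]; abel
  have hzy' : z - y = -(c⁻¹ • w) := by simp only [z]; abel
  have hw : ⟪g', w⟫ - ⟪f', w⟫ = ‖w‖ ^ 2 := by
    rw [← inner_sub_left, real_inner_self_eq_norm_sq]
  rw [hzx, inner_sub_right, real_inner_smul_right] at hxz
  rw [hzy', inner_neg_right, real_inner_smul_right, norm_neg, norm_smul, mul_pow,
    Real.norm_eq_abs, sq_abs] at hzy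
  have hstep : ‖w‖ ^ 2 / (2 * c) = c⁻¹ * (⟪g', w⟫ - ⟪f', w⟫) - c / 2 * (c⁻¹ ^ 2 * ‖w‖ ^ 2) := by
    rw [hw]; field_simp; ring
  linarith

theorem ConvexOn.norm_sq_div_le_inner_sub {c : ℝ} (hc : 0 < c) (hg : ConvexOn ℝ univ g)
    (hs : ConvexOn ℝ univ fun y => c / 2 * ‖y‖ ^ 2 - g y)
    (hx : HasGradientAt g f' x) (hy : HasGradientAt g g' y) :
    ‖f' - g'‖ ^ 2 / c ≤ ⟪f' - g', x - y⟫ := by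
  have hxy := hg.add_inner_add_norm_sq_div_le hc hs hx hy
  have hyx := hg.add_inner_add_norm_sq_div_le hc hs hy hx
  rw [norm_sub_rev] at hxy
  have hinner : ⟪f' - g', x - y⟫ = -⟪f', y - x⟫ - ⟪g', x - y⟫ := by
    rw [← neg_sub x y, inner_neg_right, inner_sub_left]; ring
  have hhalf : ‖f' - g'‖ ^ 2 / c = ‖f' - g'‖ ^ 2 / (2 * c) + ‖f' - g'‖ ^ 2 / (2 * c) := by
    field_simp; ring
  linarith

theorem mul_norm_sq_add_div_le_inner_sub {μ L : ℝ} (hμL : μ < L)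
    (hL : ConvexOn ℝ univ fun x => L / 2 * ‖x‖ ^ 2 - f x)
    (hμ : ConvexOn ℝ univ fun x => f x - μ / 2 * ‖x‖ ^ 2)
    (hx : HasGradientAt f f' x) (hy : HasGradientAt f g' y) :
    μ * ‖x - y‖ ^ 2 + ‖f' - g' - μ • (x - y)‖ ^ 2 / (L - μ) ≤ ⟪f' - g', x - y⟫ := by
  have hs : ConvexOn ℝ univ fun x => (L - μ) / 2 * ‖x‖ ^ 2 - (f x - μ / 2 * ‖x‖ ^ 2) := by
    convert hL using 2; ring
  have h := hμ.norm_sq_div_le_inner_sub (sub_pos.2 hμL) hs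
    (hx.sub (hasGradientAt_half_mul_norm_sq μ x)) (hy.sub (hasGradientAt_half_mul_norm_sq μ y))
  have hsplit : f' - μ • x - (g' - μ • y) = f' - g' - μ • (x - y) := by module
  rw [hsplit, inner_sub_left, real_inner_smul_left, real_inner_self_eq_norm_sq] at h
  linarith

theorem stmt_2_general {d : ℕ} (f₁ f₂ : EuclideanSpace ℝ (Fin d) → ℝ) (μ₁ L₁ : ℝ)
    (hf₁ : Differentiable ℝ f₁)
    (h₁ : μ₁ < L₁)
    (hL₁ : ConvexOn ℝ univ (fun x => L₁ / 2 * ‖x‖ ^ 2 - f₁ x))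
    (hμ₁ : ConvexOn ℝ univ (fun x => f₁ x - μ₁ / 2 * ‖x‖ ^ 2))
    (xk xk1 : EuclideanSpace ℝ (Fin d))
    (hDCA : gradient f₁ xk1 = gradient f₂ xk) :
    ⟪gradient f₁ xk - gradient f₂ xk, xk - xk1⟫ ≥
      μ₁ * ‖xk - xk1‖ ^ 2 +
      ‖(gradient f₁ xk - gradient f₂ xk) - μ₁ • (xk - xk1)‖ ^ 2 / (L₁ - μ₁) := by
  have h := mul_norm_sq_add_div_le_inner_sub h₁ hL₁ hμ₁ (hf₁ xk).hasGradientAt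
    (hf₁ xk1).hasGradientAt
  rwa [hDCA] at h

theorem stmt_2 {d : ℕ} (f₁ f₂ : EuclideanSpace ℝ (Fin d) → ℝ) (μ₁ L₁ μ₂ L₂ : ℝ)
    (hf₁ : Differentiable ℝ f₁) (hf₂ : Differentiable ℝ f₂)
    (h₁ : μ₁ < L₁) (h₂ : μ₂ < L₂)
    (hL₁ : ConvexOn ℝ univ (fun x => L₁ / 2 * ‖x‖ ^ 2 - f₁ x))
    (hμ₁ : ConvexOn ℝ univ (fun x => f₁ x - μ₁ / 2 * ‖x‖ ^ 2))
    (hL₂ : ConvexOn ℝ univ (fun x => L₂ / 2 * ‖x‖ ^ 2 - f₂ x))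
    (hμ₂ : ConvexOn ℝ univ (fun x => f₂ x - μ₂ / 2 * ‖x‖ ^ 2))
    (xk xk1 : EuclideanSpace ℝ (Fin d))
    (hDCA : gradient f₁ xk1 = gradient f₂ xk) :
    ⟪gradient f₁ xk - gradient f₂ xk, xk - xk1⟫ ≥
      μ₁ * ‖xk - xk1‖ ^ 2 +
      ‖(gradient f₁ xk - gradient f₂ xk) - μ₁ • (xk - xk1)‖ ^ 2 / (L₁ - μ₁) :=
  stmt_2_general f₁ f₂ μ₁ L₁ hf₁ h₁ hL₁ hμ₁ xk xk1 hDCA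
end

section
/- Let f₁, f₂ : ℝ^d → ℝ be differentiable with curvatures in [μ₁, L₁] and [μ₂, L₂] respectively, where L₁ > μ₂ ≥ μ₁ ≥ 0 and μ₂ < L₂. Let x₀, x₁, x₂ satisfy ∇f₁(x₁) = ∇f₂(x₀) and ∇f₁(x₂) = ∇f₂(x₁). Then F(x₁) − F(x₂) ≥ μ₂(μ₂−μ₁)/(L₁−μ₁)·(1/2)‖x₀ − x₁‖² + (μ₂ + μ₁(L₁−μ₂)/(L₁−μ₁))·(1/2)‖x₁ − x₂‖², where F = f₁ − f₂. -/
/-!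
The interpolation inequality for `f₁`, whose curvature lies in `[μ₁, L₁]`, between `x₁` and `x₂`,
added to the `μ₂`-lower quadratic bound for `f₂` at `x₁`, gives
`F x₁ - F x₂ ≥ (μ₁ + μ₂)/2 ‖x₁ - x₂‖² + ‖∇f₁ x₁ - ∇f₁ x₂ - μ₁ (x₁ - x₂)‖² / (2 (L₁ - μ₁))`,
the linear terms cancelling because `∇f₁ x₂ = ∇f₂ x₁`. By the DCA steps the gradient difference is
`∇f₂ x₀ - ∇f₂ x₁`, and `μ₂`-strong monotonicity of `∇f₂` bounds the last square below by
`(μ₂ - μ₁) (μ₂ ‖x₀ - x₁‖² - μ₁ ‖x₁ - x₂‖²)`.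
-/

open Set
open scoped RealInnerProductSpace

theorem ConvexOn.add_fderiv_sub_le {E : Type*} [NormedAddCommGroup E] [NormedSpace ℝ E]
    {f : E → ℝ} {f' : E →L[ℝ] ℝ} {x : E} (hf : ConvexOn ℝ univ f) (hf' : HasFDerivAt f f' x)
    (y : E) : f x + f' (y - x) ≤ f y := by
  have hline : ConvexOn ℝ univ (f ∘ (AffineMap.lineMap x y : ℝ →ᵃ[ℝ] E)) :=
    hf.comp_affineMap (AffineMap.lineMap x y)
  have hderiv : HasDerivAt (f ∘ (AffineMap.lineMap x y : ℝ →ᵃ[ℝ] E)) (f' (y - x)) 0 := by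
    refine HasFDerivAt.comp_hasDerivAt (0 : ℝ) ?_ AffineMap.hasDerivAt_lineMap
    simpa using hf'
  have := hline.le_slope_of_hasDerivAt (mem_univ 0) (mem_univ 1) zero_lt_one hderiv
  simp only [slope_def_field, Function.comp_apply, AffineMap.lineMap_apply_one,
    AffineMap.lineMap_apply_zero, sub_zero, div_one] at this
  linarith

section Curvature

variable {E : Type*} [NormedAddCommGroup E] [InnerProductSpace ℝ E] [CompleteSpace E]
  {f : E → ℝ}

theorem ConvexOn.add_inner_sub_le {x g : E} (hf : ConvexOn ℝ univ f) (hg : HasGradientAt f g x)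
    (y : E) :
    f x + ⟪g, y - x⟫ ≤ f y := by
  simpa using hf.add_fderiv_sub_le (hasGradientAt_iff_hasFDerivAt.mp hg) y

theorem HasGradientAt.sub_half_mul_norm_sq {x g : E} (hg : HasGradientAt f g x) (c : ℝ) :
    HasGradientAt (fun z => f z - c / 2 * ‖z‖ ^ 2) (g - c • x) x := by
  rw [hasGradientAt_iff_hasFDerivAt] at hg ⊢
  refine (hg.sub ((hasStrictFDerivAt_norm_sq x).hasFDerivAt.const_mul (c / 2))).congr_fderiv ?_
  ext v
  simp only [map_sub, map_smul, sub_apply, smul_apply, InnerProductSpace.toDual_apply_apply,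
    innerSL_apply_apply, smul_eq_mul, nsmul_eq_mul]
  ring

theorem HasGradientAt.neg {x g : E} (hg : HasGradientAt f g x) :
    HasGradientAt (fun z => -f z) (-g) x := by
  rw [hasGradientAt_iff_hasFDerivAt, map_neg]
  exact (hasGradientAt_iff_hasFDerivAt.mp hg).neg

theorem add_inner_sub_add_norm_sq_le {x g : E} (hg : HasGradientAt f g x) {μ : ℝ}
    (hμ : ConvexOn ℝ univ (fun z => f z - μ / 2 * ‖z‖ ^ 2)) (y : E) :
    f x + ⟪g, y - x⟫ + μ / 2 * ‖y - x‖ ^ 2 ≤ f y := by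
  have := hμ.add_inner_sub_le (hg.sub_half_mul_norm_sq μ) y
  rw [norm_sub_sq_real]
  simp only [inner_sub_left, inner_sub_right, real_inner_smul_left, real_inner_self_eq_norm_sq,
    real_inner_comm x y] at this ⊢
  linarith

theorem le_add_inner_sub_add_norm_sq {x g : E} (hg : HasGradientAt f g x) {L : ℝ}
    (hL : ConvexOn ℝ univ (fun z => L / 2 * ‖z‖ ^ 2 - f z)) (y : E) :
    f y ≤ f x + ⟪g, y - x⟫ + L / 2 * ‖y - x‖ ^ 2 := by
  have hL' : ConvexOn ℝ univ (fun z => -f z - -L / 2 * ‖z‖ ^ 2) := by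
    convert hL using 2; ring
  have := add_inner_sub_add_norm_sq_le hg.neg hL' y
  simp only [inner_neg_left] at this
  linarith

theorem mul_norm_sq_le_inner_sub {x x' g g' : E} (hg : HasGradientAt f g x)
    (hg' : HasGradientAt f g' x') {μ : ℝ} (hμ : ConvexOn ℝ univ (fun z => f z - μ / 2 * ‖z‖ ^ 2)) :
    μ * ‖x - x'‖ ^ 2 ≤ ⟪g - g', x - x'⟫ := by
  have h₁ := add_inner_sub_add_norm_sq_le hg hμ x'
  have h₂ := add_inner_sub_add_norm_sq_le hg' hμ x
  rw [norm_sub_rev x' x, ← neg_sub x x', inner_neg_right] at h₁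
  rw [inner_sub_left]
  linarith

theorem add_inner_sub_add_norm_sq_div_le_of_convexOn {x y gx gy : E}
    (hgx : HasGradientAt f gx x) (hgy : HasGradientAt f gy y) (hf : ConvexOn ℝ univ f)
    {L : ℝ} (hL₀ : 0 < L) (hL : ConvexOn ℝ univ (fun z => L / 2 * ‖z‖ ^ 2 - f z)) :
    f y + ⟪gy, x - y⟫ + ‖gx - gy‖ ^ 2 / (2 * L) ≤ f x := by
  set h := gx - gy
  have hzy : x - L⁻¹ • h - y = (x - y) - L⁻¹ • h := by abel
  have hzx : x - L⁻¹ • h - x = -(L⁻¹ • h) := by abel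
  have lower := hf.add_inner_sub_le hgy (x - L⁻¹ • h)
  have upper := le_add_inner_sub_add_norm_sq hgx hL (x - L⁻¹ • h)
  rw [hzy, inner_sub_right, real_inner_smul_right] at lower
  rw [hzx, inner_neg_right, real_inner_smul_right, norm_neg, norm_smul, mul_pow,
    Real.norm_eq_abs, sq_abs] at upper
  have hh : ⟪gx, h⟫ - ⟪gy, h⟫ = ‖h‖ ^ 2 := by rw [← inner_sub_left, real_inner_self_eq_norm_sq]
  have e₁ : L / 2 * ((L⁻¹) ^ 2 * ‖h‖ ^ 2) = ‖h‖ ^ 2 / (2 * L) := by field_simp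
  have e₂ : L⁻¹ * ⟪gx, h⟫ - L⁻¹ * ⟪gy, h⟫ = 2 * (‖h‖ ^ 2 / (2 * L)) := by
    rw [← mul_sub, hh]; field_simp
  linarith

-- `f - μ/2 ‖·‖²` has curvature in `[0, L - μ]` and gradient `∇f - μ • id`.
theorem add_inner_sub_add_norm_sq_add_div_le {x y gx gy : E} (hgx : HasGradientAt f gx x)
    (hgy : HasGradientAt f gy y) {μ L : ℝ} (hμL : μ < L)
    (hμ : ConvexOn ℝ univ (fun z => f z - μ / 2 * ‖z‖ ^ 2))
    (hL : ConvexOn ℝ univ (fun z => L / 2 * ‖z‖ ^ 2 - f z)) :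
    f y + ⟪gy, x - y⟫ + μ / 2 * ‖x - y‖ ^ 2 + ‖gx - gy - μ • (x - y)‖ ^ 2 / (2 * (L - μ))
      ≤ f x := by
  have hL' : ConvexOn ℝ univ (fun z => (L - μ) / 2 * ‖z‖ ^ 2 - (f z - μ / 2 * ‖z‖ ^ 2)) := by
    convert hL using 2; ring
  have := add_inner_sub_add_norm_sq_div_le_of_convexOn (hgx.sub_half_mul_norm_sq μ)
    (hgy.sub_half_mul_norm_sq μ) hμ (sub_pos.mpr hμL) hL'
  rw [show gx - μ • x - (gy - μ • y) = gx - gy - μ • (x - y) by rw [smul_sub]; abel] at this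
  rw [norm_sub_sq_real]
  simp only [inner_sub_left, inner_sub_right, real_inner_smul_left, real_inner_self_eq_norm_sq,
    real_inner_comm x y] at this ⊢
  linarith

end Curvature

theorem mul_sub_le_norm_sub_smul_sq {E : Type*} [NormedAddCommGroup E] [InnerProductSpace ℝ E]
    {a u w : E} {μ₁ μ₂ : ℝ} (hμ₁ : 0 ≤ μ₁) (hμ₁₂ : μ₁ ≤ μ₂) (ha : μ₂ * ‖u‖ ^ 2 ≤ ⟪a, u⟫) :
    (μ₂ - μ₁) * (μ₂ * ‖u‖ ^ 2 - μ₁ * ‖w‖ ^ 2) ≤ ‖a - μ₁ • w‖ ^ 2 := by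
  -- expand `0 ≤ ‖a - μ₁ • w - (μ₂ - μ₁) • u‖²` and bound `2⟪w, u⟫ ≤ ‖w‖² + ‖u‖²`
  have hsq : 0 ≤ ‖a - μ₁ • w - (μ₂ - μ₁) • u‖ ^ 2 := sq_nonneg _
  have hwu : 2 * ⟪w, u⟫ ≤ ‖w‖ ^ 2 + ‖u‖ ^ 2 := by
    have := norm_sub_sq_real w u
    nlinarith [sq_nonneg ‖w - u‖]
  have hcross : 2 * μ₁ * (μ₂ - μ₁) * ⟪w, u⟫ ≤ μ₁ * (μ₂ - μ₁) * (‖w‖ ^ 2 + ‖u‖ ^ 2) := by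
    nlinarith [mul_nonneg hμ₁ (sub_nonneg.mpr hμ₁₂)]
  rw [norm_sub_sq_real (a - μ₁ • w), norm_smul, mul_pow, Real.norm_eq_abs, sq_abs,
    real_inner_smul_right, inner_sub_left, real_inner_smul_left] at hsq
  nlinarith [mul_le_mul_of_nonneg_left ha (sub_nonneg.mpr hμ₁₂)]

theorem stmt_9_general {d : ℕ} (f₁ f₂ : EuclideanSpace ℝ (Fin d) → ℝ) (μ₁ L₁ μ₂ : ℝ)
    (hf₁ : Differentiable ℝ f₁) (hf₂ : Differentiable ℝ f₂)
    (hL₁ : L₁ > μ₂) (hμ₂₁ : μ₂ ≥ μ₁) (hμ₁ : μ₁ ≥ 0)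
    (hcL₁ : ConvexOn ℝ univ (fun x => L₁ / 2 * ‖x‖ ^ 2 - f₁ x))
    (hcμ₁ : ConvexOn ℝ univ (fun x => f₁ x - μ₁ / 2 * ‖x‖ ^ 2))
    (hcμ₂ : ConvexOn ℝ univ (fun x => f₂ x - μ₂ / 2 * ‖x‖ ^ 2))
    (x₀ x₁ x₂ : EuclideanSpace ℝ (Fin d))
    (hDCA₀ : gradient f₁ x₁ = gradient f₂ x₀)
    (hDCA₁ : gradient f₁ x₂ = gradient f₂ x₁) :
    (f₁ x₁ - f₂ x₁) - (f₁ x₂ - f₂ x₂) ≥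
      μ₂ * (μ₂ - μ₁) / (L₁ - μ₁) * (1 / 2) * ‖x₀ - x₁‖ ^ 2 +
      (μ₂ + μ₁ * (L₁ - μ₂) / (L₁ - μ₁)) * (1 / 2) * ‖x₁ - x₂‖ ^ 2 := by
  have hL₁μ₁ : 0 < L₁ - μ₁ := by linarith
  have hf₁_interp := add_inner_sub_add_norm_sq_add_div_le (hDCA₀ ▸ (hf₁ x₁).hasGradientAt)
    (hDCA₁ ▸ (hf₁ x₂).hasGradientAt) (by linarith) hcμ₁ hcL₁
  have hf₂_lower := add_inner_sub_add_norm_sq_le (hf₂ x₁).hasGradientAt hcμ₂ x₂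
  rw [norm_sub_rev, ← neg_sub, inner_neg_right] at hf₂_lower
  have hgap := mul_sub_le_norm_sub_smul_sq (w := x₁ - x₂) hμ₁ hμ₂₁
    (mul_norm_sq_le_inner_sub (hf₂ x₀).hasGradientAt (hf₂ x₁).hasGradientAt hcμ₂)
  have hgap' := div_le_div_of_nonneg_right hgap (by positivity : (0 : ℝ) ≤ 2 * (L₁ - μ₁))
  have hrhs : μ₂ * (μ₂ - μ₁) / (L₁ - μ₁) * (1 / 2) * ‖x₀ - x₁‖ ^ 2 +
      (μ₂ + μ₁ * (L₁ - μ₂) / (L₁ - μ₁)) * (1 / 2) * ‖x₁ - x₂‖ ^ 2 =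
      (μ₁ + μ₂) / 2 * ‖x₁ - x₂‖ ^ 2 +
        (μ₂ - μ₁) * (μ₂ * ‖x₀ - x₁‖ ^ 2 - μ₁ * ‖x₁ - x₂‖ ^ 2) / (2 * (L₁ - μ₁)) := by
    field_simp
    ring
  linarith

theorem stmt_9 {d : ℕ} (f₁ f₂ : EuclideanSpace ℝ (Fin d) → ℝ) (μ₁ L₁ μ₂ L₂ : ℝ)
    (hf₁ : Differentiable ℝ f₁) (hf₂ : Differentiable ℝ f₂)
    (hL₁ : L₁ > μ₂) (hμ₂₁ : μ₂ ≥ μ₁) (hμ₁ : μ₁ ≥ 0) (h₂ : μ₂ < L₂)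
    (hcL₁ : ConvexOn ℝ univ (fun x => L₁ / 2 * ‖x‖ ^ 2 - f₁ x))
    (hcμ₁ : ConvexOn ℝ univ (fun x => f₁ x - μ₁ / 2 * ‖x‖ ^ 2))
    (hcL₂ : ConvexOn ℝ univ (fun x => L₂ / 2 * ‖x‖ ^ 2 - f₂ x))
    (hcμ₂ : ConvexOn ℝ univ (fun x => f₂ x - μ₂ / 2 * ‖x‖ ^ 2))
    (x₀ x₁ x₂ : EuclideanSpace ℝ (Fin d))
    (hDCA₀ : gradient f₁ x₁ = gradient f₂ x₀)
    (hDCA₁ : gradient f₁ x₂ = gradient f₂ x₁) :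
    (f₁ x₁ - f₂ x₁) - (f₁ x₂ - f₂ x₂) ≥
      μ₂ * (μ₂ - μ₁) / (L₁ - μ₁) * (1 / 2) * ‖x₀ - x₁‖ ^ 2 +
      (μ₂ + μ₁ * (L₁ - μ₂) / (L₁ - μ₁)) * (1 / 2) * ‖x₁ - x₂‖ ^ 2 :=
  stmt_9_general f₁ f₂ μ₁ L₁ μ₂ hf₁ hf₂ hL₁ hμ₂₁ hμ₁ hcL₁ hcμ₁ hcμ₂ x₀ x₁ x₂ hDCA₀ hDCA₁
end

section
/- Let f₁, f₂ : ℝ^d → ℝ be differentiable with curvatures in [μ₁, L₁] and [μ₂, L₂] respectively, where L₂ > μ₁ > 0, μ₂ ∈ [−L₂μ₁/(L₂+μ₁), 0), μ₁ + μ₂ > 0 and μ₁ < L₁. Let x₀, x₁, x₂ satisfy ∇f₁(x₁) = ∇f₂(x₀) and ∇f₁(x₂) = ∇f₂(x₁). Then F(x₀) − F(x₁) ≥ (μ₁ + L₂μ₂/(L₂+μ₂))·(1/2)‖x₀ − x₁‖² + (μ₁²/(2(L₂+μ₂)))‖x₁ − x₂‖², where F = f₁ − f₂. -/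
/-!
Write `g = ∇f₁ x₁ = ∇f₂ x₀` and `h = ∇f₁ x₂ = ∇f₂ x₁`. Strong convexity of `f₁` gives
`f₁ x₀ ≥ f₁ x₁ + ⟪g, x₀ - x₁⟫ + μ₁/2 ‖x₀ - x₁‖²`. For `f₂`, the two interpolation inequalities
between `x₀` and `x₁`, added with the weights `L₂` and `-μ₂` (nonnegative because `f₂` is only
weakly convex), lose their cross terms and give
`f₂ x₁ ≥ f₂ x₀ + ⟪g, x₁ - x₀⟫ + L₂μ₂/(2(L₂+μ₂)) ‖x₀ - x₁‖² + ‖h - g‖²/(2(L₂+μ₂))`.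
Subtracting, the inner products cancel, and strong monotonicity of `∇f₁` gives
`‖h - g‖ ≥ μ₁ ‖x₂ - x₁‖`.
-/

open Set
open scoped RealInnerProductSpace Gradient

variable {E : Type*} [NormedAddCommGroup E] [InnerProductSpace ℝ E]

theorem ConvexOn.add_le_of_hasFDerivAt {h : E → ℝ} {h' : E →L[ℝ] ℝ} {x : E}
    (hc : ConvexOn ℝ univ h) (hd : HasFDerivAt h h' x) (y : E) :
    h x + h' (y - x) ≤ h y := by
  rw [← AffineMap.lineMap_apply_zero (k := ℝ) x y] at hd
  have hslope := (hc.comp_affineMap (AffineMap.lineMap x y)).le_slope_of_hasDerivAt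
    (mem_univ 0) (mem_univ 1) one_pos (hd.comp_hasDerivAt (0 : ℝ) AffineMap.hasDerivAt_lineMap)
  simp only [slope_def_field, Function.comp_apply, AffineMap.lineMap_apply_one,
    AffineMap.lineMap_apply_zero, sub_zero, div_one] at hslope
  linarith

theorem add_le_of_hasFDerivAt_of_convexOn_sub_sq {f : E → ℝ} {f' : E →L[ℝ] ℝ} {x : E} {m : ℝ}
    (hc : ConvexOn ℝ univ fun x => f x - m / 2 * ‖x‖ ^ 2) (hf : HasFDerivAt f f' x) (y : E) :
    f x + f' (y - x) + m / 2 * ‖y - x‖ ^ 2 ≤ f y := by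
  have hsub := hc.add_le_of_hasFDerivAt
    (hf.sub ((hasStrictFDerivAt_norm_sq x).hasFDerivAt.const_mul (m / 2))) y
  simp only [sub_apply, smul_apply, coe_innerSL_apply, nsmul_eq_mul, Nat.cast_ofNat,
    smul_eq_mul] at hsub
  have hexp : ‖y‖ ^ 2 = ‖x‖ ^ 2 + 2 * ⟪x, y - x⟫ + ‖y - x‖ ^ 2 := by
    rw [← norm_add_sq_real, add_sub_cancel]
  linear_combination hsub - m / 2 * hexp

variable [CompleteSpace E] {f : E → ℝ} {m L : ℝ}

theorem add_inner_gradient_add_sq_le (hc : ConvexOn ℝ univ fun x => f x - m / 2 * ‖x‖ ^ 2)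
    {x : E} (hf : DifferentiableAt ℝ f x) (y : E) :
    f x + ⟪∇ f x, y - x⟫ + m / 2 * ‖y - x‖ ^ 2 ≤ f y := by
  simpa only [inner_gradient_left] using
    add_le_of_hasFDerivAt_of_convexOn_sub_sq hc hf.hasFDerivAt y

theorem le_add_inner_gradient_add_sq (hc : ConvexOn ℝ univ fun x => L / 2 * ‖x‖ ^ 2 - f x)
    {x : E} (hf : DifferentiableAt ℝ f x) (y : E) :
    f y ≤ f x + ⟪∇ f x, y - x⟫ + L / 2 * ‖y - x‖ ^ 2 := by
  have hc' : ConvexOn ℝ univ fun x => -f x - -L / 2 * ‖x‖ ^ 2 := by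
    convert hc using 2
    ring
  have hneg := add_le_of_hasFDerivAt_of_convexOn_sub_sq hc' hf.hasFDerivAt.neg y
  simp only [neg_apply, ← inner_gradient_left] at hneg
  linarith

theorem add_inner_gradient_add_sq_add_sq_le (hmL : m < L)
    (hcm : ConvexOn ℝ univ fun x => f x - m / 2 * ‖x‖ ^ 2)
    (hcL : ConvexOn ℝ univ fun x => L / 2 * ‖x‖ ^ 2 - f x) {x y : E}
    (hx : DifferentiableAt ℝ f x) (hy : DifferentiableAt ℝ f y) :
    f x + ⟪∇ f x, y - x⟫ + m / 2 * ‖y - x‖ ^ 2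
      + 1 / (2 * (L - m)) * ‖∇ f y - ∇ f x - m • (y - x)‖ ^ 2 ≤ f y := by
  have hk : L - m ≠ 0 := sub_ne_zero.mpr hmL.ne'
  rw [one_div, mul_inv]
  -- `z` minimises the upper model of `f` at `y` minus its lower model at `x`
  set u := ∇ f y - ∇ f x - m • (y - x)
  set z := y - (L - m)⁻¹ • u
  have hlower := add_inner_gradient_add_sq_le hcm hx z
  have hupper := le_add_inner_gradient_add_sq hcL hy z
  have hzx : z - x = (y - x) - (L - m)⁻¹ • u := by module
  have hzy : z - y = -((L - m)⁻¹ • u) := by module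
  have hu : ‖u‖ ^ 2 = ⟪∇ f y, u⟫ - ⟪∇ f x, u⟫ - m * ⟪y - x, u⟫ := by
    rw [← real_inner_self_eq_norm_sq]
    simp only [u, inner_sub_left, real_inner_smul_left]
  rw [hzx, inner_sub_right, real_inner_smul_right, norm_sub_sq_real, real_inner_smul_right,
    norm_smul, Real.norm_eq_abs, mul_pow, sq_abs] at hlower
  rw [hzy, inner_neg_right, real_inner_smul_right, norm_neg, norm_smul, Real.norm_eq_abs, mul_pow,
    sq_abs] at hupper
  linear_combination hlower + hupper + (L - m)⁻¹ * hu
    + (L - m)⁻¹ / 2 * ‖u‖ ^ 2 * mul_inv_cancel₀ hk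

theorem add_inner_gradient_add_sq_add_sq_le_of_nonpos (hm : m ≤ 0) (hLm : 0 < L + m)
    (hcm : ConvexOn ℝ univ fun x => f x - m / 2 * ‖x‖ ^ 2)
    (hcL : ConvexOn ℝ univ fun x => L / 2 * ‖x‖ ^ 2 - f x) {x y : E}
    (hx : DifferentiableAt ℝ f x) (hy : DifferentiableAt ℝ f y) :
    f x + ⟪∇ f x, y - x⟫ + L * m / (L + m) / 2 * ‖y - x‖ ^ 2
      + 1 / (2 * (L + m)) * ‖∇ f y - ∇ f x‖ ^ 2 ≤ f y := by
  have hL : 0 ≤ L := by linarith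
  have hk : L - m ≠ 0 := by linarith
  have hxy := add_inner_gradient_add_sq_add_sq_le (by linarith) hcm hcL hx hy
  have hyx := add_inner_gradient_add_sq_add_sq_le (by linarith) hcm hcL hy hx
  have hswap : ∇ f x - ∇ f y - m • (x - y) = -(∇ f y - ∇ f x - m • (y - x)) := by module
  rw [hswap, norm_neg, norm_sub_rev x y, ← neg_sub y x, inner_neg_right] at hyx
  have hQ : ‖∇ f y - ∇ f x - m • (y - x)‖ ^ 2
      = ‖∇ f y - ∇ f x‖ ^ 2 - 2 * m * (⟪∇ f y, y - x⟫ - ⟪∇ f x, y - x⟫) + m ^ 2 * ‖y - x‖ ^ 2 := by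
    rw [norm_sub_sq_real, real_inner_smul_right, inner_sub_left, norm_smul, Real.norm_eq_abs,
      mul_pow, sq_abs]
    ring
  rw [one_div, mul_inv] at hxy hyx
  have key : (L + m) * (f x + ⟪∇ f x, y - x⟫) + L * m / 2 * ‖y - x‖ ^ 2
      + ‖∇ f y - ∇ f x‖ ^ 2 / 2 ≤ (L + m) * f y := by
    linear_combination mul_le_mul_of_nonneg_left hxy hL
      + mul_le_mul_of_nonneg_left hyx (neg_nonneg.2 hm)
      - ‖∇ f y - ∇ f x - m • (y - x)‖ ^ 2 / 2 * mul_inv_cancel₀ hk - 1 / 2 * hQ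
  calc _ = ((L + m) * (f x + ⟪∇ f x, y - x⟫) + L * m / 2 * ‖y - x‖ ^ 2
        + ‖∇ f y - ∇ f x‖ ^ 2 / 2) / (L + m) := by field_simp
    _ ≤ f y := by rwa [div_le_iff₀' hLm]

theorem mul_norm_sub_sq_le_inner_gradient_sub
    (hc : ConvexOn ℝ univ fun x => f x - m / 2 * ‖x‖ ^ 2) {x y : E}
    (hx : DifferentiableAt ℝ f x) (hy : DifferentiableAt ℝ f y) :
    m * ‖y - x‖ ^ 2 ≤ ⟪∇ f y - ∇ f x, y - x⟫ := by
  have hxy := add_inner_gradient_add_sq_le hc hx y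
  have hyx := add_inner_gradient_add_sq_le hc hy x
  rw [norm_sub_rev x y, ← neg_sub y x, inner_neg_right] at hyx
  rw [inner_sub_left]
  linarith

theorem mul_norm_sub_le_norm_gradient_sub
    (hc : ConvexOn ℝ univ fun x => f x - m / 2 * ‖x‖ ^ 2) {x y : E}
    (hx : DifferentiableAt ℝ f x) (hy : DifferentiableAt ℝ f y) :
    m * ‖y - x‖ ≤ ‖∇ f y - ∇ f x‖ := by
  rcases (norm_nonneg (y - x)).eq_or_lt with h0 | hpos
  · rw [← h0, mul_zero]
    exact norm_nonneg _
  · refine le_of_mul_le_mul_right ?_ hpos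
    calc m * ‖y - x‖ * ‖y - x‖ = m * ‖y - x‖ ^ 2 := by ring
      _ ≤ ⟪∇ f y - ∇ f x, y - x⟫ := mul_norm_sub_sq_le_inner_gradient_sub hc hx hy
      _ ≤ ‖∇ f y - ∇ f x‖ * ‖y - x‖ := real_inner_le_norm _ _

theorem stmt_10_general {d : ℕ} (f₁ f₂ : EuclideanSpace ℝ (Fin d) → ℝ) (μ₁ μ₂ L₂ : ℝ)
    (hf₁ : Differentiable ℝ f₁) (hf₂ : Differentiable ℝ f₂)
    (hL₂ : L₂ > μ₁) (hμ₁ : μ₁ > 0)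
    (hμ₂ : μ₂ ∈ Set.Ico (-L₂ * μ₁ / (L₂ + μ₁)) 0)
    (hsum : μ₁ + μ₂ > 0)
    (hcμ₁ : ConvexOn ℝ univ (fun x => f₁ x - μ₁ / 2 * ‖x‖ ^ 2))
    (hcL₂ : ConvexOn ℝ univ (fun x => L₂ / 2 * ‖x‖ ^ 2 - f₂ x))
    (hcμ₂ : ConvexOn ℝ univ (fun x => f₂ x - μ₂ / 2 * ‖x‖ ^ 2))
    (x₀ x₁ x₂ : EuclideanSpace ℝ (Fin d))
    (hDCA₀ : gradient f₁ x₁ = gradient f₂ x₀)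
    (hDCA₁ : gradient f₁ x₂ = gradient f₂ x₁) :
    (f₁ x₀ - f₂ x₀) - (f₁ x₁ - f₂ x₁) ≥
      (μ₁ + L₂ * μ₂ / (L₂ + μ₂)) * (1 / 2) * ‖x₀ - x₁‖ ^ 2 +
      μ₁ ^ 2 / (2 * (L₂ + μ₂)) * ‖x₁ - x₂‖ ^ 2 := by
  have hK : 0 < L₂ + μ₂ := by linarith
  have hf₁_lower := add_inner_gradient_add_sq_le hcμ₁ (hf₁ x₁) x₀
  have hf₂_lower := add_inner_gradient_add_sq_add_sq_le_of_nonpos hμ₂.2.le hK hcμ₂ hcL₂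
    (hf₂ x₀) (hf₂ x₁)
  have hgrad : μ₁ * ‖x₁ - x₂‖ ≤ ‖∇ f₂ x₁ - ∇ f₂ x₀‖ := by
    rw [← hDCA₀, ← hDCA₁, norm_sub_rev x₁]
    exact mul_norm_sub_le_norm_gradient_sub hcμ₁ (hf₁ x₁) (hf₁ x₂)
  have hgrad_sq : μ₁ ^ 2 / (2 * (L₂ + μ₂)) * ‖x₁ - x₂‖ ^ 2
      ≤ 1 / (2 * (L₂ + μ₂)) * ‖∇ f₂ x₁ - ∇ f₂ x₀‖ ^ 2 := by
    rw [div_mul_eq_mul_div, one_div_mul_eq_div, ← mul_pow]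
    gcongr
  rw [hDCA₀] at hf₁_lower
  rw [norm_sub_rev x₁, ← neg_sub x₀, inner_neg_right] at hf₂_lower
  linarith

theorem stmt_10 {d : ℕ} (f₁ f₂ : EuclideanSpace ℝ (Fin d) → ℝ) (μ₁ L₁ μ₂ L₂ : ℝ)
    (hf₁ : Differentiable ℝ f₁) (hf₂ : Differentiable ℝ f₂)
    (hL₂ : L₂ > μ₁) (hμ₁ : μ₁ > 0)
    (hμ₂ : μ₂ ∈ Set.Ico (-L₂ * μ₁ / (L₂ + μ₁)) 0)
    (hsum : μ₁ + μ₂ > 0) (h₁ : μ₁ < L₁)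
    (hcL₁ : ConvexOn ℝ univ (fun x => L₁ / 2 * ‖x‖ ^ 2 - f₁ x))
    (hcμ₁ : ConvexOn ℝ univ (fun x => f₁ x - μ₁ / 2 * ‖x‖ ^ 2))
    (hcL₂ : ConvexOn ℝ univ (fun x => L₂ / 2 * ‖x‖ ^ 2 - f₂ x))
    (hcμ₂ : ConvexOn ℝ univ (fun x => f₂ x - μ₂ / 2 * ‖x‖ ^ 2))
    (x₀ x₁ x₂ : EuclideanSpace ℝ (Fin d))
    (hDCA₀ : gradient f₁ x₁ = gradient f₂ x₀)
    (hDCA₁ : gradient f₁ x₂ = gradient f₂ x₁) :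
    (f₁ x₀ - f₂ x₀) - (f₁ x₁ - f₂ x₁) ≥
      (μ₁ + L₂ * μ₂ / (L₂ + μ₂)) * (1 / 2) * ‖x₀ - x₁‖ ^ 2 +
      μ₁ ^ 2 / (2 * (L₂ + μ₂)) * ‖x₁ - x₂‖ ^ 2 :=
  stmt_10_general f₁ f₂ μ₁ μ₂ L₂ hf₁ hf₂ hL₂ hμ₁ hμ₂ hsum hcμ₁ hcL₂ hcμ₂ x₀ x₁ x₂ hDCA₀ hDCA₁
end
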